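/- arXiv:2508.19616 — 3 statements merged into one kernel-verified Lean document; each statement's English description precedes it below -/
import Mathlib

section
/- For a positive integer m, the integer m^2 + 12m - 28 is a perfect square if and only if m = 2, m = 4, or m = 11. -/
theorem stmt_1 (m : ℤ) (hm : 1 ≤ m) :
    (∃ k : ℤ, m ^ 2 + 12 * m - 28 = k ^ 2) ↔ m = 2 ∨ m = 4 ∨ m = 11 := by
  constructor
  · rintro ⟨k, hk⟩
    have habs : |k| ^ 2 = k ^ 2 := sq_abs k
    set j := |k| with hj
    have hj0 : 0 ≤ j := abs_nonneg k
    have hk' : m ^ 2 + 12 * m - 28 = j ^ 2 := by rw [habs]; exact hk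
    have hm26 : m ≤ 26 := by
      by_contra h
      push_neg at h
      have h1 : (m + 5) ^ 2 < j ^ 2 := by nlinarith
      have h2 : j ^ 2 < (m + 6) ^ 2 := by nlinarith
      have h3 : m + 5 < j := by nlinarith
      have h4 : j < m + 6 := by nlinarith
      omega
    have hjb : j ≤ 31 := by nlinarith
    have hk2 : m * m + 12 * m - 28 = j * j := by nlinarith
    interval_cases m <;> interval_cases j <;> omega
  · rintro (rfl | rfl | rfl)
    · exact ⟨0, by norm_num⟩
    · exact ⟨6, by norm_num⟩
    · exact ⟨15, by norm_num⟩
end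

section
/- Let a ≥ 1 and b ≥ 1 be integers and let G be the complete multipartite graph with a parts each of size b. Then the characteristic polynomial of the signless Laplacian matrix Q(G) = D(G) + A(G) is (x - b(a-1))^{a(b-1)} (x - b(a-2))^{a-1} (x - 2b(a-1)). -/
/-!
The signless Laplacian of `K_{a·b}` is `b(a-1)·I + A(K_a) ⊗ J_b`, and `A(K_a) ⊗ J_b` factors as
`M N` with `N M = b·A(K_a)` (`M` reads off the part of a vertex, `N` sums over a part).
Hence `χ(M N) = X^(ab-a) χ(b·A(K_a))`, and `b·A(K_a) = b·J_a - b·I` is a rank-one matrix shifted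
by a scalar, whose characteristic polynomial is `(X + b)^(a-1) (X - b(a-1))`.
-/

open Polynomial

/-- Adjacency matrix of the complete multipartite graph with `a` parts each of size `b`. -/
def completeMultipartiteAdj (a b : ℕ) : Matrix (Fin a × Fin b) (Fin a × Fin b) ℤ :=
  fun u v => if u.1 ≠ v.1 then 1 else 0

/-- Degree matrix: every vertex has degree `b * (a - 1)`. -/
def completeMultipartiteDeg (a b : ℕ) : Matrix (Fin a × Fin b) (Fin a × Fin b) ℤ :=
  Matrix.diagonal fun _ => (b : ℤ) * ((a : ℤ) - 1)

open Matrix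

theorem Matrix.charpoly_submatrix_fst {m n R : Type*} [Fintype m] [DecidableEq m] [Fintype n]
    [DecidableEq n] [Nonempty n] [CommRing R] (B : Matrix m m R) :
    (B.submatrix Prod.fst Prod.fst : Matrix (m × n) (m × n) R).charpoly =
      X ^ (Fintype.card m * Fintype.card n - Fintype.card m) *
        ((Fintype.card n : R) • B).charpoly := by
  set E : Matrix m (m × n) R := (1 : Matrix m m R).submatrix id Prod.fst
  have hfactor : (B.submatrix Prod.fst Prod.fst : Matrix (m × n) (m × n) R) =
      B.submatrix Prod.fst id * E := by
    rw [← submatrix_mul _ _ _ _ _ Function.bijective_id, mul_one]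
  have hswap : E * (B.submatrix Prod.fst id : Matrix (m × n) m R) = (Fintype.card n : R) • B := by
    ext k l
    simp [E, mul_apply, one_apply, Fintype.sum_prod_type]
  have hcard : Fintype.card m ≤ Fintype.card (m × n) := by
    rw [Fintype.card_prod]
    exact Nat.le_mul_of_pos_right _ Fintype.card_pos
  rw [hfactor, charpoly_mul_comm_of_le _ _ hcard, hswap, Fintype.card_prod]

theorem Matrix.charpoly_vecMulVec_of_nonempty {n R : Type*} [Fintype n] [DecidableEq n]
    [Nonempty n] [CommRing R] (u v : n → R) :
    (vecMulVec u v).charpoly = X ^ (Fintype.card n - 1) * (X - C (u ⬝ᵥ v)) := by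
  rw [charpoly_vecMulVec, smul_eq_C_mul, mul_sub, ← pow_succ, Nat.sub_add_cancel Fintype.card_pos]
  ring

theorem SimpleGraph.charpoly_smul_adjMatrix_completeGraph {V R : Type*} [Fintype V]
    [DecidableEq V] [Nonempty V] [CommRing R] (r : R) :
    (r • (completeGraph V).adjMatrix R).charpoly =
      (X + C r) ^ (Fintype.card V - 1) * (X - C ((Fintype.card V - 1 : R) * r)) := by
  have hrankOne : r • (completeGraph V).adjMatrix R =
      vecMulVec (fun _ => r) (fun _ => 1) - scalar V r := by
    ext i j
    by_cases h : i = j <;> simp [h, vecMulVec_apply]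
  rw [hrankOne, charpoly_sub_scalar, charpoly_vecMulVec_of_nonempty]
  simp [dotProduct]
  ring

theorem stmt_14 (a b : ℕ) (ha : 1 ≤ a) (hb : 1 ≤ b) :
    (completeMultipartiteDeg a b + completeMultipartiteAdj a b).charpoly =
      (X - C ((b : ℤ) * ((a : ℤ) - 1))) ^ (a * (b - 1)) *
        (X - C ((b : ℤ) * ((a : ℤ) - 2))) ^ (a - 1) *
        (X - C (2 * (b : ℤ) * ((a : ℤ) - 1))) := by
  have : Nonempty (Fin a) := Fin.pos_iff_nonempty.mp ha
  have : Nonempty (Fin b) := Fin.pos_iff_nonempty.mp hb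
  have hAdj : completeMultipartiteAdj a b =
      ((SimpleGraph.completeGraph (Fin a)).adjMatrix ℤ).submatrix Prod.fst Prod.fst := rfl
  have hDeg : completeMultipartiteDeg a b = scalar (Fin a × Fin b) ((b : ℤ) * ((a : ℤ) - 1)) :=
    rfl
  rw [hAdj, hDeg, add_comm, ← sub_neg_eq_add, ← map_neg, charpoly_sub_scalar,
    charpoly_submatrix_fst, SimpleGraph.charpoly_smul_adjMatrix_completeGraph]
  simp only [Fintype.card_fin, ← Nat.mul_sub_one, mul_comp, pow_comp, add_comp, sub_comp, X_comp,
    C_comp]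
  simp only [map_neg, map_mul, map_sub, map_natCast, map_ofNat, map_one]
  ring
end

section
/- Let z ≥ 1 and even m ≥ 4 be integers such that z is even, and let G be the complete 3-partite graph with two parts of size z/2 and one part of size z(m-1)/2. Then the Laplacian spectrum of G is {0 with multiplicity 1, z with multiplicity z(m-1)/2 - 1, zm/2 with multiplicity z - 2, z(m+1)/2 with multiplicity 2}, and the Laplacian energy of G equals z^2(m-1)(m-2)/(m+1) + 2z. -/
open Polynomial

/-- Real adjacency matrix of the complete 3-partite graph with two parts of size `t`
(indexed by `Fin 2 × Fin t`) and one part of size `w` (indexed by `Fin w`):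
two vertices are adjacent iff they lie in different parts. -/
def tripartiteAdjR (t w : ℕ) :
    Matrix ((Fin 2 × Fin t) ⊕ Fin w) ((Fin 2 × Fin t) ⊕ Fin w) ℝ :=
  fun u v =>
    match u, v with
    | Sum.inl x, Sum.inl y => if x.1 ≠ y.1 then 1 else 0
    | Sum.inl _, Sum.inr _ => 1
    | Sum.inr _, Sum.inl _ => 1
    | Sum.inr _, Sum.inr _ => 0

/-- Degree matrix of the above graph: a vertex in a small part has degree `t + w`,
a vertex in the big part has degree `2 t`. -/
def tripartiteDegR (t w : ℕ) :
    Matrix ((Fin 2 × Fin t) ⊕ Fin w) ((Fin 2 × Fin t) ⊕ Fin w) ℝ :=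
  Matrix.diagonal fun u =>
    match u with
    | Sum.inl _ => (t : ℝ) + w
    | Sum.inr _ => 2 * t

/-!
Two vertices `u ≠ v` of the same part are twins (non-adjacent, same neighbourhood), so
`e_u - e_v` is a Laplacian eigenvector for their common degree: `t + w` in a small part, `2t` in
the big part. This gives `2(t - 1) + (w - 1)` eigenvectors. The part indicators span an invariant
subspace on which `L 1_P = N 1_P - |P| 1` with `N = 2t + w`, contributing the eigenvalue `0`
(on `1`) and `N` twice. An explicit inverse of this eigenbasis makes `L` similar to the diagonal
matrix of eigenvalues. With `z = 2t` and `2w = z(m - 1)` the energy is a sum of absolute values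
whose signs are fixed by `m ≥ 2`.
-/

open Matrix

theorem Matrix.charpoly_eq_charpoly_diagonal_of_eigenbasis {n R : Type*} [Fintype n]
    [DecidableEq n] [CommRing R] (L W : Matrix n n R) (u : n → n → R) (μ : n → R)
    (hL : ∀ c, L *ᵥ u c = μ c • u c) (hW : ∀ c, W *ᵥ u c = Pi.single c 1) :
    L.charpoly = (diagonal μ).charpoly := by
  set U : Matrix n n R := (of u)ᵀ
  have hWU : W * U = 1 := by
    ext r c
    simpa [U, mul_apply, mulVec, dotProduct, one_apply, Pi.single_apply] using congrFun (hW c) r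
  have hLU : L * U = U * diagonal μ := by
    ext r c
    rw [mul_diagonal]
    simpa [U, mul_apply, mulVec, dotProduct, mul_comm] using congrFun (hL c) r
  calc L.charpoly = (L * U * W).charpoly := by rw [mul_assoc, mul_eq_one_comm.mp hWU, mul_one]
    _ = (U * (diagonal μ * W)).charpoly := by rw [hLU, mul_assoc]
    _ = (diagonal μ * W * U).charpoly := charpoly_mul_comm _ _
    _ = (diagonal μ).charpoly := by rw [mul_assoc, hWU, mul_one]

theorem Matrix.roots_charpoly_diagonal {n R : Type*} [Fintype n] [DecidableEq n] [CommRing R]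
    [IsDomain R] (d : n → R) : (diagonal d).charpoly.roots = Finset.univ.val.map d := by
  rw [charpoly_diagonal, Finset.prod_eq_multiset_prod,
    ← roots_multiset_prod_X_sub_C (Finset.univ.val.map d), Multiset.map_map]
  rfl

theorem Matrix.diagonal_sub_mulVec_single_sub_single {n R : Type*} [Fintype n] [DecidableEq n]
    [Ring R] (d : n → R) (A : Matrix n n R) {u v : n} (hA : ∀ r, A r u = A r v) :
    (diagonal d - A) *ᵥ (Pi.single u 1 - Pi.single v 1) =
      Pi.single u (d u) - Pi.single v (d v) := by
  ext r
  simp only [mulVec_sub, mulVec_single, Pi.sub_apply, col_apply, sub_apply, hA,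
    MulOpposite.op_one, one_smul, diagonal_apply, Pi.single_apply]
  split_ifs <;> simp_all
  abel

theorem Fin.univ_val_map_ite_eq_zero {α : Type*} {n : ℕ} [NeZero n] (a b : α) :
    Finset.univ.val.map (fun j : Fin n => if j = 0 then a else b) =
      a ::ₘ Multiset.replicate (n - 1) b := by
  obtain ⟨k, rfl⟩ := Nat.exists_eq_succ_of_ne_zero (NeZero.ne n)
  simp [List.ofFn_succ, Fin.succ_ne_zero, List.ofFn_const, ← Multiset.cons_coe,
    Multiset.coe_replicate]

namespace Tripartite

abbrev Vertex (t w : ℕ) := (Fin 2 × Fin t) ⊕ Fin w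

abbrev lap (t w : ℕ) : Matrix (Vertex t w) (Vertex t w) ℝ :=
  tripartiteDegR t w - tripartiteAdjR t w

variable {t w : ℕ}

def smallPartInd (i : Fin 2) : Vertex t w → ℝ
  | .inl x => if x.1 = i then 1 else 0
  | .inr _ => 0

def bigPartInd : Vertex t w → ℝ
  | .inl _ => 0
  | .inr _ => 1

theorem smallPartInd_add_smallPartInd_add_bigPartInd :
    smallPartInd 0 + smallPartInd 1 + bigPartInd = (1 : Vertex t w → ℝ) := by
  ext (⟨i, j⟩ | k) <;> [fin_cases i; skip] <;> simp [smallPartInd, bigPartInd]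

@[simp]
theorem smallPartInd_dotProduct_smallPartInd (i i' : Fin 2) :
    smallPartInd i ⬝ᵥ (smallPartInd i' : Vertex t w → ℝ) = if i = i' then (t : ℝ) else 0 := by
  fin_cases i <;> fin_cases i' <;>
  simp [dotProduct, Fintype.sum_sum_type, Fintype.sum_prod_type, smallPartInd]

@[simp]
theorem smallPartInd_dotProduct_bigPartInd (i : Fin 2) :
    smallPartInd i ⬝ᵥ (bigPartInd : Vertex t w → ℝ) = 0 := by
  simp [dotProduct, Fintype.sum_sum_type, smallPartInd, bigPartInd]

@[simp]
theorem bigPartInd_dotProduct_smallPartInd (i : Fin 2) :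
    bigPartInd ⬝ᵥ (smallPartInd i : Vertex t w → ℝ) = 0 := by
  simp [dotProduct, Fintype.sum_sum_type, smallPartInd, bigPartInd]

@[simp]
theorem bigPartInd_dotProduct_bigPartInd :
    bigPartInd ⬝ᵥ (bigPartInd : Vertex t w → ℝ) = w := by
  simp [dotProduct, Fintype.sum_sum_type, bigPartInd]

theorem lap_mulVec_smallPartInd (i : Fin 2) :
    lap t w *ᵥ smallPartInd i = (2 * t + w : ℝ) • smallPartInd i - (t : ℝ) • 1 := by
  ext (⟨i', j⟩ | k) <;> [(fin_cases i <;> fin_cases i'); fin_cases i] <;>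
  simp only [sub_mulVec, tripartiteDegR, Pi.sub_apply, mulVec_diagonal] <;>
  simp only [mulVec, dotProduct, Fintype.sum_sum_type, Fintype.sum_prod_type, Fin.sum_univ_two] <;>
  simp [tripartiteAdjR, smallPartInd] <;> ring

theorem lap_mulVec_bigPartInd :
    lap t w *ᵥ bigPartInd = (2 * t + w : ℝ) • bigPartInd - (w : ℝ) • 1 := by
  ext (⟨i', j⟩ | k) <;> [fin_cases i'; skip] <;>
  simp only [sub_mulVec, tripartiteDegR, Pi.sub_apply, mulVec_diagonal] <;>
  simp only [mulVec, dotProduct, Fintype.sum_sum_type, Fintype.sum_prod_type, Fin.sum_univ_two] <;>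
  simp [tripartiteAdjR, bigPartInd]

theorem lap_mulVec_one : lap t w *ᵥ 1 = 0 := by
  rw [← smallPartInd_add_smallPartInd_add_bigPartInd, mulVec_add, mulVec_add,
    lap_mulVec_smallPartInd, lap_mulVec_smallPartInd, lap_mulVec_bigPartInd]
  linear_combination (norm := module)
    (2 * t + w : ℝ) • smallPartInd_add_smallPartInd_add_bigPartInd (t := t) (w := w)

variable [NeZero t] [NeZero w]

noncomputable def eigvec : Vertex t w → Vertex t w → ℝ
  | .inl (i, j) =>
    if j = 0 then
      if i = 0 then smallPartInd 0 - smallPartInd 1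
      else (w : ℝ) • (smallPartInd 0 + smallPartInd 1) - (2 * t : ℝ) • bigPartInd
    else Pi.single (.inl (i, 0)) 1 - Pi.single (.inl (i, j)) 1
  | .inr k => if k = 0 then 1 else Pi.single (.inr 0) 1 - Pi.single (.inr k) 1

def eigval : Vertex t w → ℝ
  | .inl (_, j) => if j = 0 then 2 * t + w else t + w
  | .inr k => if k = 0 then 0 else 2 * t

theorem lap_mulVec_eigvec (c : Vertex t w) : lap t w *ᵥ eigvec c = eigval c • eigvec c := by
  rcases c with ⟨i, j⟩ | k
  · by_cases hj : j = 0
    · subst hj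
      by_cases hi : i = 0
      · simp only [eigvec, eigval, if_pos hi, if_true]
        rw [mulVec_sub, lap_mulVec_smallPartInd, lap_mulVec_smallPartInd]
        module
      · simp only [eigvec, eigval, if_neg hi, if_true]
        rw [mulVec_sub, mulVec_smul, mulVec_smul, mulVec_add, lap_mulVec_smallPartInd,
          lap_mulVec_smallPartInd, lap_mulVec_bigPartInd]
        module
    · simp only [eigvec, eigval, if_neg hj]
      rw [lap, tripartiteDegR, diagonal_sub_mulVec_single_sub_single]
      · simp [smul_sub, ← Pi.single_smul']
      · rintro (_ | _) <;> rfl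
  · by_cases hk : k = 0
    · simp [eigvec, eigval, hk, lap_mulVec_one]
    · simp only [eigvec, eigval, if_neg hk]
      rw [lap, tripartiteDegR, diagonal_sub_mulVec_single_sub_single]
      · simp [smul_sub, ← Pi.single_smul']
      · rintro (_ | _) <;> rfl

/-- Row `r` of the inverse eigenbasis, up to the term `-e_r` added for non-first vertices `r`.
At a vertex `v` other than the first of its part `P` the row is `x ↦ mean_P x - x_v`; the rows at
the three first vertices invert the `3 × 3` system expressing a part-constant `x` in terms of
`eigvec` at those vertices. -/
noncomputable def partDual : Vertex t w → Vertex t w → ℝ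
  | .inl (i, j) =>
    if j = 0 then
      if i = 0 then (2 * t : ℝ)⁻¹ • (smallPartInd 0 - smallPartInd 1)
      else (2 * t * (2 * t + w) : ℝ)⁻¹ • (smallPartInd 0 + smallPartInd 1) -
        (w * (2 * t + w) : ℝ)⁻¹ • bigPartInd
    else (t : ℝ)⁻¹ • smallPartInd i
  | .inr k => if k = 0 then (2 * t + w : ℝ)⁻¹ • 1 else (w : ℝ)⁻¹ • bigPartInd

def nonFirst : Vertex t w → ℝ
  | .inl (_, j) => if j = 0 then 0 else 1
  | .inr k => if k = 0 then 0 else 1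

noncomputable def eigvecInv : Matrix (Vertex t w) (Vertex t w) ℝ :=
  of partDual - diagonal nonFirst

theorem eigvecInv_mulVec_apply (x : Vertex t w → ℝ) (r : Vertex t w) :
    (eigvecInv *ᵥ x) r = partDual r ⬝ᵥ x - nonFirst r * x r := by
  simp [eigvecInv, sub_mulVec, mulVec_diagonal]
  rfl

theorem eigvecInv_mulVec_single_sub_single {u v : Vertex t w}
    (huv : ∀ r, partDual r u = partDual r v) (hu : nonFirst u = 0) (hv : nonFirst v = 1) :
    eigvecInv *ᵥ (Pi.single u 1 - Pi.single v 1) = Pi.single v 1 := by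
  rw [eigvecInv, ← neg_sub, neg_mulVec, diagonal_sub_mulVec_single_sub_single _ (of partDual) huv,
    hu, hv]
  simp

theorem eigvecInv_mulVec_eigvec_of_nonFirst_eq_zero {c : Vertex t w} (hc : nonFirst c = 0) :
    eigvecInv *ᵥ eigvec c = Pi.single c 1 := by
  have ht : (t : ℝ) ≠ 0 := Nat.cast_ne_zero.2 (NeZero.ne t)
  have hw : (w : ℝ) ≠ 0 := Nat.cast_ne_zero.2 (NeZero.ne w)
  have hN : (2 * t + w : ℝ) ≠ 0 := by positivity
  ext r
  rw [eigvecInv_mulVec_apply]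
  rcases c with ⟨i, j⟩ | k <;>
    simp only [nonFirst, ite_eq_left_iff, one_ne_zero, imp_false, not_not] at hc <;> subst hc <;>
    rcases r with ⟨i', j'⟩ | k' <;> (try fin_cases i) <;> (try fin_cases i') <;>
    simp [eigvec, partDual, nonFirst, smallPartInd, bigPartInd, Pi.single_apply,
      ← smallPartInd_add_smallPartInd_add_bigPartInd]
  all_goals split_ifs <;> simp <;> field_simp <;> ring

theorem eigvecInv_mulVec_eigvec (c : Vertex t w) : eigvecInv *ᵥ eigvec c = Pi.single c 1 := by
  by_cases hc : nonFirst c = 0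
  · exact eigvecInv_mulVec_eigvec_of_nonFirst_eq_zero hc
  rcases c with ⟨i, j⟩ | k
  · have hj : j ≠ 0 := by simpa [nonFirst] using hc
    simp only [eigvec, if_neg hj]
    apply eigvecInv_mulVec_single_sub_single _ (by simp [nonFirst]) (by simp [nonFirst, hj])
    rintro (⟨_, _⟩ | _) <;> simp only [partDual] <;> split_ifs <;> rfl
  · have hk : k ≠ 0 := by simpa [nonFirst] using hc
    simp only [eigvec, if_neg hk]
    apply eigvecInv_mulVec_single_sub_single _ (by simp [nonFirst]) (by simp [nonFirst, hk])
    rintro (⟨_, _⟩ | _) <;> simp only [partDual] <;> split_ifs <;> rfl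

theorem univ_val_map_eigval :
    Finset.univ.val.map (eigval : Vertex t w → ℝ) =
      Multiset.replicate 1 0 + Multiset.replicate (w - 1) (2 * t : ℝ) +
        Multiset.replicate (2 * t - 2) (t + w : ℝ) + Multiset.replicate 2 (2 * t + w : ℝ) := by
  rw [← Finset.univ_disjSum_univ, Finset.val_disjSum, Multiset.disjSum, Multiset.map_add,
    Multiset.map_map, Multiset.map_map, ← Finset.univ_product_univ, Finset.product_val,
    show (Finset.univ : Finset (Fin 2)).val = 0 ::ₘ 1 ::ₘ 0 from rfl]
  simp only [Multiset.cons_product, Multiset.zero_product, Multiset.map_add, Multiset.map_map,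
    Function.comp_def, add_zero, eigval, Fin.univ_val_map_ite_eq_zero]
  rw [show 2 * t - 2 = (t - 1) + (t - 1) by have := NeZero.ne t; omega, Multiset.replicate_add]
  simp only [← Multiset.singleton_add, Multiset.replicate_succ, Multiset.replicate_zero]
  abel

theorem roots_charpoly_lap :
    (lap t w).charpoly.roots =
      Multiset.replicate 1 0 + Multiset.replicate (w - 1) (2 * t : ℝ) +
        Multiset.replicate (2 * t - 2) (t + w : ℝ) + Multiset.replicate 2 (2 * t + w : ℝ) := by
  rw [charpoly_eq_charpoly_diagonal_of_eigenbasis _ eigvecInv eigvec eigval lap_mulVec_eigvec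
    eigvecInv_mulVec_eigvec, roots_charpoly_diagonal, univ_val_map_eigval]

end Tripartite

theorem sum_abs_sub_replicate_eq (z m : ℝ) (a b : ℕ) (hz : 0 ≤ z) (hm : 2 ≤ m)
    (ha : (a : ℝ) = z * (m - 1) / 2 - 1) (hb : (b : ℝ) = z - 2) :
    ((Multiset.replicate 1 0 + Multiset.replicate a z + Multiset.replicate b (z * m / 2) +
        Multiset.replicate 2 (z * (m + 1) / 2)).map fun β => |β - z * (2 * m - 1) / (m + 1)|).sum =
      z ^ 2 * (m - 1) * (m - 2) / (m + 1) + 2 * z := by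
  set c := z * (2 * m - 1) / (m + 1) with hc
  have hm1 : 0 < m + 1 := by linarith
  have hzc : z ≤ c := by rw [hc, le_div_iff₀ hm1]; nlinarith
  have hcm : c ≤ z * m / 2 := by
    rw [hc, div_le_iff₀ hm1]
    nlinarith [mul_nonneg hz (mul_nonneg (by linarith : 0 ≤ m - 1) (by linarith : 0 ≤ m - 2))]
  have hcm1 : c ≤ z * (m + 1) / 2 := by linarith
  simp only [Multiset.map_add, Multiset.map_replicate, Multiset.sum_add, Multiset.sum_replicate,
    nsmul_eq_mul, ha, hb]
  rw [abs_of_nonpos (by linarith : 0 - c ≤ 0), abs_of_nonpos (sub_nonpos.2 hzc),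
    abs_of_nonneg (sub_nonneg.2 hcm), abs_of_nonneg (sub_nonneg.2 hcm1), hc]
  field_simp
  ring

theorem stmt_18_general (m z t w : ℕ) (hm : 4 ≤ m) (hz : 1 ≤ z)
    (ht : z = 2 * t) (hw : 2 * w = z * (m - 1)) :
    (tripartiteDegR t w - tripartiteAdjR t w).charpoly.roots =
      Multiset.replicate 1 (0 : ℝ) +
        Multiset.replicate (z * (m - 1) / 2 - 1) ((z : ℝ)) +
        Multiset.replicate (z - 2) ((z : ℝ) * m / 2) +
        Multiset.replicate 2 ((z : ℝ) * (m + 1) / 2) ∧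
    (((tripartiteDegR t w - tripartiteAdjR t w).charpoly.roots.map
        fun β => |β - (z : ℝ) * (2 * m - 1) / (m + 1)|).sum
      = (z : ℝ) ^ 2 * ((m : ℝ) - 1) * ((m : ℝ) - 2) / ((m : ℝ) + 1) + 2 * z) := by
  have hwpos : 0 < w := by have : 0 < z * (m - 1) := Nat.mul_pos (by omega) (by omega); omega
  have : NeZero t := ⟨by omega⟩
  have : NeZero w := ⟨hwpos.ne'⟩
  have hcount₁ : z * (m - 1) / 2 - 1 = w - 1 := by rw [← hw]; omega
  have hcount₂ : z - 2 = 2 * t - 2 := by omega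
  have hzr : (z : ℝ) = 2 * t := by exact_mod_cast ht
  have hwr : (w : ℝ) = t * (m - 1) := by
    have := congrArg (Nat.cast : ℕ → ℝ) hw
    push_cast [Nat.cast_sub (by omega : 1 ≤ m), hzr] at this
    linarith
  have hroots : (tripartiteDegR t w - tripartiteAdjR t w).charpoly.roots =
      Multiset.replicate 1 (0 : ℝ) + Multiset.replicate (z * (m - 1) / 2 - 1) ((z : ℝ)) +
        Multiset.replicate (z - 2) ((z : ℝ) * m / 2) +
        Multiset.replicate 2 ((z : ℝ) * (m + 1) / 2) := by
    rw [Tripartite.roots_charpoly_lap, hcount₁, hcount₂,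
      show (z : ℝ) * (m + 1) / 2 = 2 * t + w by rw [hzr, hwr]; ring,
      show (z : ℝ) * m / 2 = t + w by rw [hzr, hwr]; ring, hzr]
  refine ⟨hroots, ?_⟩
  rw [hroots]
  apply sum_abs_sub_replicate_eq _ _ _ _ (by positivity) (by exact_mod_cast (by omega : 2 ≤ m))
  · rw [hcount₁, Nat.cast_sub (by omega), hwr, hzr]; ring
  · rw [hcount₂, Nat.cast_sub (by omega)]; push_cast; linarith

theorem stmt_18 (m z t w : ℕ) (hm : 4 ≤ m) (hme : Even m) (hz : 1 ≤ z)
    (ht : z = 2 * t) (hw : 2 * w = z * (m - 1)) :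
    (tripartiteDegR t w - tripartiteAdjR t w).charpoly.roots =
      Multiset.replicate 1 (0 : ℝ) +
        Multiset.replicate (z * (m - 1) / 2 - 1) ((z : ℝ)) +
        Multiset.replicate (z - 2) ((z : ℝ) * m / 2) +
        Multiset.replicate 2 ((z : ℝ) * (m + 1) / 2) ∧
    (((tripartiteDegR t w - tripartiteAdjR t w).charpoly.roots.map
        fun β => |β - (z : ℝ) * (2 * m - 1) / (m + 1)|).sum
      = (z : ℝ) ^ 2 * ((m : ℝ) - 1) * ((m : ℝ) - 2) / ((m : ℝ) + 1) + 2 * z) :=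
  stmt_18_general m z t w hm hz ht hw
end
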